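/- arXiv:2603.28190 — 4 statements merged into one kernel-verified Lean document; each statement's English description precedes it below -/
import Mathlib

section
/- Let S be a finite nonempty linearly ordered set and let F and Q be exchangeable information structures on S^N with identical, strictly positive marginals. Then F is cCAD-higher than Q if and only if F is iCAD-higher than Q, i.e., if and only if for every s ∈ S and every order interval K = {y ∈ S : a ≤ y ≤ b} (a, b ∈ S) with s ∈ K, one has F_s(K) ≥ Q_s(K). -/
open Finset

def IsPMF {n : ℕ} {S : Type*} [Fintype S] (F : (Fin (n + 2) → S) → ℝ) : Prop :=
  (∀ t, 0 ≤ F t) ∧ ∑ t : Fin (n + 2) → S, F t = 1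

def Exchangeable {n : ℕ} {S : Type*} [Fintype S] (F : (Fin (n + 2) → S) → ℝ) : Prop :=
  ∀ (π : Equiv.Perm (Fin (n + 2))) (t : Fin (n + 2) → S), F (t ∘ π) = F t

noncomputable def marg {n : ℕ} {S : Type*} [Fintype S] [LinearOrder S]
    (F : (Fin (n + 2) → S) → ℝ) (s : S) : ℝ :=
  ∑ t : Fin (n + 2) → S, if t 0 = s then F t else 0

noncomputable def condProb {n : ℕ} {S : Type*} [Fintype S] [LinearOrder S]
    (F : (Fin (n + 2) → S) → ℝ) (s : S) (K : Finset S) : ℝ :=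
  (∑ t : Fin (n + 2) → S, if t 0 = s ∧ t 1 ∈ K then F t else 0) / marg F s

def upSet {S : Type*} [Fintype S] [LinearOrder S] (shat : S) : Finset S :=
  univ.filter (fun y => shat ≤ y)

def downSet {S : Type*} [Fintype S] [LinearOrder S] (shat : S) : Finset S :=
  univ.filter (fun y => y ≤ shat)

/-- The order interval `{y : a ≤ y ≤ b}`. -/
def orderInterval {S : Type*} [Fintype S] [LinearOrder S] (a b : S) : Finset S :=
  univ.filter (fun y => a ≤ y ∧ y ≤ b)

def cCAD {n : ℕ} {S : Type*} [Fintype S] [LinearOrder S]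
    (F Q : (Fin (n + 2) → S) → ℝ) : Prop :=
  (∀ s, marg F s = marg Q s) ∧
  ∀ s : S,
    (∀ shat : S, shat ≤ s → condProb F s (upSet shat) ≥ condProb Q s (upSet shat)) ∧
    (∀ shat : S, s ≤ shat → condProb F s (downSet shat) ≥ condProb Q s (downSet shat))

/-- `F` is iCAD-higher than `Q`: for every `s` and every order interval containing `s`,
the conditional probability is weakly larger under `F`. -/
def iCAD {n : ℕ} {S : Type*} [Fintype S] [LinearOrder S]
    (F Q : (Fin (n + 2) → S) → ℝ) : Prop :=
  (∀ s, marg F s = marg Q s) ∧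
  ∀ s a b : S, a ≤ s → s ≤ b →
    condProb F s (orderInterval a b) ≥ condProb Q s (orderInterval a b)

lemma condProb_interval_eq {n : ℕ} {S : Type*} [Fintype S] [LinearOrder S]
    (F : (Fin (n + 2) → S) → ℝ) (s a b : S) (hab : a ≤ b) (hm : marg F s ≠ 0) :
    condProb F s (orderInterval a b) =
      condProb F s (upSet a) + condProb F s (downSet b) - 1 := by
  have hnum : (∑ t : Fin (n + 2) → S, if t 0 = s ∧ t 1 ∈ orderInterval a b then F t else 0)
      = (∑ t : Fin (n + 2) → S, if t 0 = s ∧ t 1 ∈ upSet a then F t else 0)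
        + (∑ t : Fin (n + 2) → S, if t 0 = s ∧ t 1 ∈ downSet b then F t else 0)
        - marg F s := by
    unfold marg
    rw [← Finset.sum_add_distrib, ← Finset.sum_sub_distrib]
    apply Finset.sum_congr rfl
    intro t _
    simp only [orderInterval, upSet, downSet, Finset.mem_filter, Finset.mem_univ, true_and]
    by_cases h0 : t 0 = s
    · by_cases h1 : a ≤ t 1
      · by_cases h2 : t 1 ≤ b
        · simp [h0, h1, h2]
        · simp [h0, h1, h2]
      · have h2 : t 1 ≤ b := le_trans (le_of_not_ge h1) hab
        simp [h0, h1, h2]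
    · simp [h0]
  unfold condProb
  rw [hnum, sub_div, add_div, div_self hm]

/-- cCAD is equivalent to iCAD. -/
theorem ccad_iff_icad {n : ℕ} {S : Type*} [Fintype S] [LinearOrder S] [Nonempty S]
    (F Q : (Fin (n + 2) → S) → ℝ)
    (hFpmf : IsPMF F) (hQpmf : IsPMF Q)
    (hFex : Exchangeable F) (hQex : Exchangeable Q)
    (hmarg : ∀ s, marg F s = marg Q s)
    (hpos : ∀ s, 0 < marg F s) :
    cCAD F Q ↔ iCAD F Q := by
  have hFne : ∀ s, marg F s ≠ 0 := fun s => (hpos s).ne'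
  have hQne : ∀ s, marg Q s ≠ 0 := fun s => (hmarg s ▸ hpos s).ne'
  constructor
  · rintro ⟨hm, h⟩
    refine ⟨hm, fun s a b ha hb => ?_⟩
    rw [condProb_interval_eq F s a b (ha.trans hb) (hFne s),
        condProb_interval_eq Q s a b (ha.trans hb) (hQne s)]
    have h1 := (h s).1 a ha
    have h2 := (h s).2 b hb
    linarith
  · rintro ⟨hm, h⟩
    refine ⟨hm, fun s => ⟨fun shat hs => ?_, fun shat hs => ?_⟩⟩
    · have hne : (univ : Finset S).Nonempty := univ_nonempty
      set M := (univ : Finset S).max' hne with hM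
      have hup : upSet shat = orderInterval shat M := by
        ext y
        simp [upSet, orderInterval, Finset.le_max' _ y (Finset.mem_univ y)]
        exact fun _ => Finset.le_max' _ y (Finset.mem_univ y)
      rw [hup]
      exact h s shat M hs (Finset.le_max' _ s (Finset.mem_univ s))
    · have hne : (univ : Finset S).Nonempty := univ_nonempty
      set m := (univ : Finset S).min' hne with hm'
      have hdown : downSet shat = orderInterval m shat := by
        ext y
        simp [downSet, orderInterval, Finset.min'_le _ y (Finset.mem_univ y)]
        exact fun _ => Finset.min'_le _ y (Finset.mem_univ y)
      rw [hdown]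
      exact h s m shat (Finset.min'_le _ s (Finset.mem_univ s)) hs
end

section
/- Let (F^θ)_{θ∈Θ} and (Q^θ)_{θ∈Θ} be common-value information structures with mF^θ = mQ^θ for every θ ∈ Θ (all marginals strictly positive). If for every θ ∈ Θ the distribution F^θ is cCAD-higher than Q^θ, then E^c(Γ̃,F) ⊇ E^c(Γ̃,Q) for every common-value affine coordination game Γ̃: every cutoff equilibrium under Q remains a cutoff equilibrium under F. -/
open Finset

/-- Posterior belief over states after observing signal `s`. -/
noncomputable def posterior {n : ℕ} {S : Type*} [Fintype S] [LinearOrder S]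
    {Θ : Type*} [Fintype Θ] (μ₀ : Θ → ℝ)
    (F : Θ → (Fin (n + 2) → S) → ℝ) (s : S) (θ : Θ) : ℝ :=
  μ₀ θ * marg (F θ) s / ∑ θ' : Θ, μ₀ θ' * marg (F θ') s

/-- A common-value affine coordination game: `d(A,θ) = α(θ) + β(θ)·(k·A + l)`
with `β ≥ 0` and `k > 0`. -/
structure CVGame (Θ : Type*) where
  α : Θ → ℝ
  β : Θ → ℝ
  k : ℝ
  l : ℝ
  hβ : ∀ θ, 0 ≤ β θ
  hk : 0 < k

noncomputable def payoff {Θ : Type*} (G : CVGame Θ) (A : ℕ) (θ : Θ) : ℝ :=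
  G.α θ + G.β θ * (G.k * (A : ℝ) + G.l)

def acts {n : ℕ} {S : Type*} (σ : S → Bool) (t : Fin (n + 2) → S) : ℕ :=
  (univ.filter (fun j : Fin (n + 2) => j ≠ 0 ∧ σ (t j) = true)).card

/-- Expected net payoff of a player with signal `s` in the common-value game. -/
noncomputable def U {n : ℕ} {S : Type*} [Fintype S] [LinearOrder S]
    {Θ : Type*} [Fintype Θ] (G : CVGame Θ) (μ₀ : Θ → ℝ)
    (F : Θ → (Fin (n + 2) → S) → ℝ) (σ : S → Bool) (s : S) : ℝ :=
  ∑ θ : Θ, posterior μ₀ F s θ *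
    ∑ t : Fin (n + 2) → S,
      if t 0 = s then (F θ t / marg (F θ) s) * payoff G (acts σ t) θ else 0

/-- A cutoff strategy: act exactly when the signal is at least some threshold. -/
def IsCutoff {S : Type*} [LinearOrder S] (σ : S → Bool) : Prop :=
  ∃ stilde : S, ∀ s, σ s = true ↔ stilde ≤ s

/-- A cutoff equilibrium of the common-value game. -/
def IsCutoffEquilibrium {n : ℕ} {S : Type*} [Fintype S] [LinearOrder S]
    {Θ : Type*} [Fintype Θ] (G : CVGame Θ) (μ₀ : Θ → ℝ)
    (F : Θ → (Fin (n + 2) → S) → ℝ) (σ : S → Bool) : Prop :=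
  IsCutoff σ ∧
  ∀ s : S, (σ s = true → 0 ≤ U G μ₀ F σ s) ∧ (σ s = false → U G μ₀ F σ s ≤ 0)

section AuxLemmas

variable {n : ℕ} {S : Type*} [Fintype S] [LinearOrder S]

lemma sum_cond_swap (F : (Fin (n + 2) → S) → ℝ) (hex : Exchangeable F) (s : S)
    (σ : S → Bool) (j : Fin (n + 2)) (hj : j ≠ 0) :
    (∑ t : Fin (n + 2) → S, if t 0 = s ∧ σ (t j) = true then F t else 0)
      = ∑ t : Fin (n + 2) → S, if t 0 = s ∧ σ (t 1) = true then F t else 0 := by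
  by_cases hj1 : j = 1
  · subst hj1; rfl
  have h10 : (1 : Fin (n + 2)) ≠ 0 := Fin.ne_of_val_ne (by simp)
  set e : (Fin (n + 2) → S) ≃ (Fin (n + 2) → S) :=
    Equiv.arrowCongr (Equiv.swap 1 j) (Equiv.refl S) with he
  have hfix : ∀ t : Fin (n + 2) → S, e t = t ∘ (Equiv.swap 1 j) := by
    intro t; funext i
    simp [he, Equiv.arrowCongr, Equiv.symm_swap]
  rw [← Equiv.sum_comp e (fun t => if t 0 = s ∧ σ (t 1) = true then F t else 0)]
  apply Finset.sum_congr rfl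
  intro t _
  have h0 : (e t) 0 = t 0 := by
    rw [hfix]
    simp [Function.comp, Equiv.swap_apply_of_ne_of_ne h10.symm (Ne.symm hj)]
  have h1 : (e t) 1 = t j := by
    rw [hfix]; simp [Function.comp]
  have hF : F (e t) = F t := by rw [hfix]; exact hex (Equiv.swap 1 j) t
  rw [h0, h1, hF]

lemma card_ne_zero_fin : (univ.filter (fun j : Fin (n + 2) => j ≠ 0)).card = n + 1 := by
  have : (univ.filter (fun j : Fin (n + 2) => j ≠ 0)) = ({0} : Finset (Fin (n + 2)))ᶜ := by
    ext j; simp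
  rw [this, Finset.card_compl]
  simp

lemma sum_acts (F : (Fin (n + 2) → S) → ℝ) (hex : Exchangeable F) (s : S) (σ : S → Bool) :
    (∑ t : Fin (n + 2) → S, if t 0 = s then F t * (acts σ t : ℝ) else 0)
      = ((n : ℝ) + 1) * ∑ t : Fin (n + 2) → S, if t 0 = s ∧ σ (t 1) = true then F t else 0 := by
  have h1 : ∀ t : Fin (n + 2) → S, (if t 0 = s then F t * (acts σ t : ℝ) else 0)
      = ∑ j : Fin (n + 2), if t 0 = s ∧ (j ≠ 0 ∧ σ (t j) = true) then F t else 0 := by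
    intro t
    by_cases h : t 0 = s
    · simp only [h, if_true, true_and]
      rw [acts, ← Finset.sum_filter, Finset.sum_const, nsmul_eq_mul, mul_comm]
    · simp [h]
  simp only [h1]
  rw [Finset.sum_comm]
  have h2 : ∀ j : Fin (n + 2),
      (∑ t : Fin (n + 2) → S, if t 0 = s ∧ (j ≠ 0 ∧ σ (t j) = true) then F t else 0)
      = if j ≠ 0 then (∑ t : Fin (n + 2) → S, if t 0 = s ∧ σ (t 1) = true then F t else 0)
        else 0 := by
    intro j
    by_cases hj : j = 0
    · simp [hj]
    · simp only [hj, ne_eq, not_false_eq_true, if_true]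
      rw [← sum_cond_swap F hex s σ j hj]
      apply Finset.sum_congr rfl
      intro t _
      simp [hj]
  simp only [h2]
  rw [← Finset.sum_filter, Finset.sum_const, card_ne_zero_fin, nsmul_eq_mul]
  push_cast
  ring

lemma condProb_compl (F : (Fin (n + 2) → S) → ℝ) (s : S) (hm : marg F s ≠ 0) (K : Finset S) :
    condProb F s Kᶜ = 1 - condProb F s K := by
  rw [condProb, condProb, eq_sub_iff_add_eq, ← add_div, div_eq_one_iff_eq hm,
    ← Finset.sum_add_distrib, marg]
  apply Finset.sum_congr rfl
  intro t _
  by_cases h0 : t 0 = s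
  · by_cases h1 : t 1 ∈ K <;> simp [h0, h1]
  · simp [h0]

lemma U_eq {Θ : Type*} [Fintype Θ] (G : CVGame Θ) (μ₀ : Θ → ℝ)
    (F : Θ → (Fin (n + 2) → S) → ℝ)
    (hFex : ∀ θ, Exchangeable (F θ)) (hFpos : ∀ θ s, 0 < marg (F θ) s)
    (σ : S → Bool) (stilde : S) (hσ : ∀ y, σ y = true ↔ stilde ≤ y) (s : S) :
    U G μ₀ F σ s = (∑ θ, posterior μ₀ F s θ * (G.α θ + G.β θ * G.l))
      + G.k * ((n : ℝ) + 1) *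
        ∑ θ, posterior μ₀ F s θ * (G.β θ * condProb (F θ) s (upSet stilde)) := by
  unfold U
  have key : ∀ θ, (∑ t : Fin (n + 2) → S,
        if t 0 = s then (F θ t / marg (F θ) s) * payoff G (acts σ t) θ else 0)
      = (G.α θ + G.β θ * G.l) + G.β θ * G.k * ((n : ℝ) + 1) * condProb (F θ) s (upSet stilde) := by
    intro θ
    have hm0 : marg (F θ) s ≠ 0 := (hFpos θ s).ne'
    have expand : ∀ t : Fin (n + 2) → S,
        (if t 0 = s then (F θ t / marg (F θ) s) * payoff G (acts σ t) θ else 0)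
        = (G.α θ + G.β θ * G.l) / marg (F θ) s * (if t 0 = s then F θ t else 0)
          + G.β θ * G.k / marg (F θ) s * (if t 0 = s then F θ t * (acts σ t : ℝ) else 0) := by
      intro t; by_cases h : t 0 = s <;> simp [h, payoff] <;> ring
    simp only [expand]
    rw [Finset.sum_add_distrib, ← Finset.mul_sum, ← Finset.mul_sum]
    have h1 : (∑ t : Fin (n + 2) → S, if t 0 = s then F θ t else 0) = marg (F θ) s := rfl
    rw [h1, sum_acts (F θ) (hFex θ) s σ]
    have h2 : (∑ t : Fin (n + 2) → S, if t 0 = s ∧ σ (t 1) = true then F θ t else 0)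
        = condProb (F θ) s (upSet stilde) * marg (F θ) s := by
      rw [condProb, div_mul_cancel₀ _ hm0]
      apply Finset.sum_congr rfl
      intro t _
      have : (σ (t 1) = true) ↔ (t 1 ∈ upSet stilde) := by simp [upSet, hσ]
      simp only [this]
    rw [h2]
    field_simp
  simp only [key]
  rw [Finset.mul_sum, ← Finset.sum_add_distrib]
  apply Finset.sum_congr rfl
  intro θ _
  ring

end AuxLemmas

/-- if `F^θ ⪰cCAD Q^θ` for every state `θ`, then every cutoff
equilibrium under `Q` remains a cutoff equilibrium under `F`, for every
common-value affine coordination game. -/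
theorem ccad_cutoff_equilibria_monotone {n : ℕ}
    {S : Type*} [Fintype S] [LinearOrder S] [Nonempty S]
    {Θ : Type*} [Fintype Θ] [Nonempty Θ]
    (μ₀ : Θ → ℝ) (hμ₀ : ∀ θ, 0 ≤ μ₀ θ) (hμ₀sum : ∑ θ : Θ, μ₀ θ = 1)
    (F Q : Θ → (Fin (n + 2) → S) → ℝ)
    (hFpmf : ∀ θ, IsPMF (F θ)) (hQpmf : ∀ θ, IsPMF (Q θ))
    (hFex : ∀ θ, Exchangeable (F θ)) (hQex : ∀ θ, Exchangeable (Q θ))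
    (hmarg : ∀ θ s, marg (F θ) s = marg (Q θ) s)
    (hFpos : ∀ θ s, 0 < marg (F θ) s)
    (hcCAD : ∀ θ, cCAD (F θ) (Q θ)) :
    ∀ (G : CVGame Θ) (σ : S → Bool),
      IsCutoffEquilibrium G μ₀ Q σ → IsCutoffEquilibrium G μ₀ F σ := by
  intro G σ hQeq
  obtain ⟨⟨stilde, hσ⟩, hEq⟩ := hQeq
  refine ⟨⟨stilde, hσ⟩, ?_⟩
  intro s
  have hQpos : ∀ θ s, 0 < marg (Q θ) s := fun θ s => hmarg θ s ▸ hFpos θ s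
  have hpost : posterior μ₀ F s = posterior μ₀ Q s := by
    funext θ; simp [posterior, hmarg]
  have hpostnn : ∀ θ, 0 ≤ posterior μ₀ Q s θ := by
    intro θ
    apply div_nonneg
    · exact mul_nonneg (hμ₀ θ) (hQpos θ s).le
    · exact Finset.sum_nonneg fun θ' _ => mul_nonneg (hμ₀ θ') (hQpos θ' s).le
  rw [U_eq G μ₀ F hFex hFpos σ stilde hσ s, hpost]
  have hUQ := U_eq G μ₀ Q hQex hQpos σ stilde hσ s
  have hkn : (0 : ℝ) < G.k * ((n : ℝ) + 1) := mul_pos G.hk (by positivity)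
  constructor
  · intro hs
    have hss : stilde ≤ s := (hσ s).1 hs
    have hQge : (0 : ℝ) ≤ U G μ₀ Q σ s := (hEq s).1 hs
    rw [hUQ] at hQge
    have hsum : (∑ θ, posterior μ₀ Q s θ * (G.β θ * condProb (Q θ) s (upSet stilde)))
        ≤ ∑ θ, posterior μ₀ Q s θ * (G.β θ * condProb (F θ) s (upSet stilde)) := by
      apply Finset.sum_le_sum
      intro θ _
      have hc := ((hcCAD θ).2 s).1 stilde hss
      exact mul_le_mul_of_nonneg_left
        (mul_le_mul_of_nonneg_left hc (G.hβ θ)) (hpostnn θ)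
    nlinarith
  · intro hs
    have hss : ¬ stilde ≤ s := fun h => by simp [(hσ s).2 h] at hs
    have hQle : U G μ₀ Q σ s ≤ 0 := (hEq s).2 hs
    rw [hUQ] at hQle
    have hslt : s < stilde := lt_of_not_ge hss
    have hsT : s ∈ univ.filter (fun y : S => y < stilde) := by simp [hslt]
    set m := (univ.filter (fun y : S => y < stilde)).max' ⟨s, hsT⟩ with hmdef
    have hsm : s ≤ m := Finset.le_max' _ s hsT
    have hmlt : m < stilde := by
      have h := Finset.max'_mem (univ.filter (fun y : S => y < stilde)) ⟨s, hsT⟩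
      rw [Finset.mem_filter] at h
      exact hmdef ▸ h.2
    have hset : upSet stilde = (downSet m)ᶜ := by
      ext y
      simp only [upSet, downSet, Finset.mem_filter, Finset.mem_univ, true_and,
        Finset.mem_compl]
      constructor
      · intro h hy
        exact absurd (lt_of_le_of_lt hy hmlt) (not_lt.mpr h)
      · intro h
        by_contra hc
        exact h (Finset.le_max' _ y (by simp [lt_of_not_ge hc]))
    have hsum : (∑ θ, posterior μ₀ Q s θ * (G.β θ * condProb (F θ) s (upSet stilde)))
        ≤ ∑ θ, posterior μ₀ Q s θ * (G.β θ * condProb (Q θ) s (upSet stilde)) := by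
      apply Finset.sum_le_sum
      intro θ _
      have hc := ((hcCAD θ).2 s).2 m hsm
      have hF : condProb (F θ) s (upSet stilde) = 1 - condProb (F θ) s (downSet m) := by
        rw [hset, condProb_compl _ _ (hFpos θ s).ne']
      have hQ' : condProb (Q θ) s (upSet stilde) = 1 - condProb (Q θ) s (downSet m) := by
        rw [hset, condProb_compl _ _ (hQpos θ s).ne']
      rw [hF, hQ']
      apply mul_le_mul_of_nonneg_left _ (hpostnn θ)
      apply mul_le_mul_of_nonneg_left _ (G.hβ θ)
      linarith
    nlinarith
end

section
/- Let S ⊂ ℝ be a finite nonempty set, and let F and Q be exchangeable probability mass functions on S × S with identical, strictly positive marginals. Define the expected second-price auction revenue R(F) := Σ_{(a,b) ∈ S×S} F(a,b)·min(a,b). If F is CAD-higher than Q, then R(F) ≥ R(Q). -/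
open Finset

/-- Marginal of a two-bidder information structure on the valuation set `S ⊂ ℝ`. -/
noncomputable def marg2 (S : Finset ℝ) (F : ℝ → ℝ → ℝ) (s : ℝ) : ℝ :=
  ∑ b ∈ S, F s b

/-- Conditional probability that the other bidder's valuation is exactly `s'`,
given own valuation `s`. -/
noncomputable def condAt (S : Finset ℝ) (F : ℝ → ℝ → ℝ) (s s' : ℝ) : ℝ :=
  F s s' / marg2 S F s

/-- `F` is CAD-higher than `Q` on `S` (two bidders). -/
def CAD2 (S : Finset ℝ) (F Q : ℝ → ℝ → ℝ) : Prop :=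
  (∀ s ∈ S, marg2 S F s = marg2 S Q s) ∧
  ∀ s ∈ S, condAt S F s s ≥ condAt S Q s s ∧
    ∀ s' ∈ S, s' ≠ s → condAt S F s s' ≤ condAt S Q s s'

/-- Expected revenue of the second-price auction under truthful bidding:
the price is the lower of the two valuations. -/
noncomputable def revenue (S : Finset ℝ) (F : ℝ → ℝ → ℝ) : ℝ :=
  ∑ a ∈ S, ∑ b ∈ S, F a b * min a b

/-- if bidder valuations are more CAD-similar, the expected revenue
of the second-price auction is weakly higher. -/
theorem cad_second_price_revenue (S : Finset ℝ) (hS : S.Nonempty)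
    (F Q : ℝ → ℝ → ℝ)
    (hFnn : ∀ a ∈ S, ∀ b ∈ S, 0 ≤ F a b) (hQnn : ∀ a ∈ S, ∀ b ∈ S, 0 ≤ Q a b)
    (hFsum : ∑ a ∈ S, ∑ b ∈ S, F a b = 1) (hQsum : ∑ a ∈ S, ∑ b ∈ S, Q a b = 1)
    (hFex : ∀ a ∈ S, ∀ b ∈ S, F a b = F b a) (hQex : ∀ a ∈ S, ∀ b ∈ S, Q a b = Q b a)
    (hmarg : ∀ s ∈ S, marg2 S F s = marg2 S Q s)
    (hpos : ∀ s ∈ S, 0 < marg2 S F s)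
    (hCAD : CAD2 S F Q) :
    revenue S Q ≤ revenue S F := by
  -- row sums of D = F - Q vanish
  have hm : ∀ s ∈ S, ∑ b ∈ S, (F s b - Q s b) = 0 := by
    intro s hs
    have h := hmarg s hs
    simp only [marg2] at h
    rw [Finset.sum_sub_distrib, h, sub_self]
  -- off-diagonal entries of D are nonpositive
  have hoff : ∀ a ∈ S, ∀ b ∈ S, a ≠ b → F a b - Q a b ≤ 0 := by
    intro a ha b hb hab
    have h := (hCAD.2 a ha).2 b hb (Ne.symm hab)
    have hp := hpos a ha
    unfold condAt at h
    rw [← hmarg a ha] at h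
    have := (div_le_div_iff_of_pos_right hp).mp h
    linarith
  -- rewrite difference of revenues
  have key : revenue S F - revenue S Q
      = ∑ a ∈ S, ∑ b ∈ S, (F a b - Q a b) * min a b := by
    unfold revenue
    rw [← Finset.sum_sub_distrib]
    refine Finset.sum_congr rfl fun a _ => ?_
    rw [← Finset.sum_sub_distrib]
    exact Finset.sum_congr rfl fun b _ => by ring
  have minid : ∀ a b : ℝ, min a b = (a + b) / 2 - |a - b| / 2 := by
    intro a b
    rcases le_total a b with h | h
    · rw [min_eq_left h, abs_of_nonpos (by linarith)]; ring
    · rw [min_eq_right h, abs_of_nonneg (by linarith)]; ring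
  have split : ∑ a ∈ S, ∑ b ∈ S, (F a b - Q a b) * min a b
      = ((∑ a ∈ S, ∑ b ∈ S, (F a b - Q a b) * (a / 2))
          + ∑ a ∈ S, ∑ b ∈ S, (F a b - Q a b) * (b / 2))
        - ∑ a ∈ S, ∑ b ∈ S, (F a b - Q a b) * (|a - b| / 2) := by
    rw [← Finset.sum_add_distrib, ← Finset.sum_sub_distrib]
    refine Finset.sum_congr rfl fun a _ => ?_
    rw [← Finset.sum_add_distrib, ← Finset.sum_sub_distrib]
    refine Finset.sum_congr rfl fun b _ => ?_
    rw [minid]; ring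
  have h1 : ∑ a ∈ S, ∑ b ∈ S, (F a b - Q a b) * (a / 2) = 0 := by
    apply Finset.sum_eq_zero; intro a ha
    rw [← Finset.sum_mul, hm a ha, zero_mul]
  have h2 : ∑ a ∈ S, ∑ b ∈ S, (F a b - Q a b) * (b / 2) = 0 := by
    rw [Finset.sum_comm]
    apply Finset.sum_eq_zero; intro b hb
    have hc : ∑ a ∈ S, (F a b - Q a b) = 0 := by
      have e : ∑ a ∈ S, (F a b - Q a b) = ∑ a ∈ S, (F b a - Q b a) :=
        Finset.sum_congr rfl fun a ha => by rw [hFex a ha b hb, hQex a ha b hb]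
      rw [e]; exact hm b hb
    rw [← Finset.sum_mul, hc, zero_mul]
  have h3 : ∑ a ∈ S, ∑ b ∈ S, (F a b - Q a b) * (|a - b| / 2) ≤ 0 := by
    apply Finset.sum_nonpos; intro a ha
    apply Finset.sum_nonpos; intro b hb
    by_cases hab : a = b
    · simp [hab]
    · exact mul_nonpos_iff.mpr (Or.inr ⟨hoff a ha b hb hab, by positivity⟩)
  linarith [key, split, h1, h2, h3]
end

section
/- Let x ∈ ℝⁿ and let K, L ⊆ ℝⁿ be finite disjoint sets with x ∉ K ∪ L, such that the points of K ∪ L ∪ {x} form an affinely independent family. Then there exists λ ∈ ℝⁿ such that λ·k < λ·x for every k ∈ K and λ·x < λ·l for every l ∈ L (where · denotes the standard inner product); in particular, if K and L are nonempty, max_{k∈K} λ·k < λ·x < min_{l∈L} λ·l. -/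
open Finset

/-- separation by a linear functional. If `x ∉ K ∪ L`, `K` and `L` are
finite and disjoint, and the points of `K ∪ L ∪ {x}` are affinely independent, then
some `λ ∈ ℝⁿ` strictly separates `K` from `{x}` from `L`:
`λ·k < λ·x` for all `k ∈ K` and `λ·x < λ·l` for all `l ∈ L`. -/
theorem affineIndependent_separation {n : ℕ} (x : Fin n → ℝ)
    (K L : Finset (Fin n → ℝ))
    (hKL : Disjoint K L) (hxK : x ∉ K) (hxL : x ∉ L)
    (hAI : AffineIndependent ℝ
      (fun y : (insert x (K ∪ L) : Finset (Fin n → ℝ)) => (y : Fin n → ℝ))) :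
    ∃ lam : Fin n → ℝ,
      (∀ k ∈ K, ∑ i, lam i * k i < ∑ i, lam i * x i) ∧
      (∀ l ∈ L, ∑ i, lam i * x i < ∑ i, lam i * l i) := by
  classical
  set T : Finset (Fin n → ℝ) := insert x (K ∪ L) with hT
  have hxT : x ∈ T := Finset.mem_insert_self _ _
  set i₀ : T := ⟨x, hxT⟩
  have hli0 : LinearIndependent ℝ (fun i : {i : T // i ≠ i₀} => ((i : T) : Fin n → ℝ) -ᵥ x) := by
    rw [affineIndependent_iff_linearIndependent_vsub ℝ _ i₀] at hAI
    exact hAI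
  set s : Set (Fin n → ℝ) := Set.range (fun i : {i : T // i ≠ i₀} => ((i : T) : Fin n → ℝ) - x) with hs
  have hli : LinearIndepOn ℝ id s := hli0.linearIndepOn_id
  have hmem_s : ∀ y ∈ K ∪ L, y - x ∈ s := by
    intro y hy
    have hyx : y ≠ x := by
      rintro rfl
      rcases Finset.mem_union.1 hy with h | h
      · exact hxK h
      · exact hxL h
    refine ⟨⟨⟨y, Finset.mem_insert_of_mem hy⟩, ?_⟩, rfl⟩
    intro h
    exact hyx (congrArg Subtype.val h)
  set B := Module.Basis.extend hli with hB
  set c : (Fin n → ℝ) → ℝ := fun v => if v + x ∈ K then -1 else if v + x ∈ L then 1 else 0 with hc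
  set f : (Fin n → ℝ) →ₗ[ℝ] ℝ := B.constr ℝ (fun b => c (b : Fin n → ℝ)) with hf
  have key : ∀ y ∈ K ∪ L, f (y - x) = c (y - x) := by
    intro y hy
    have h1 : (y - x) ∈ hli.extend (Set.subset_univ s) := hli.subset_extend _ (hmem_s y hy)
    have h2 : B ⟨y - x, h1⟩ = y - x := Module.Basis.extend_apply_self hli ⟨y - x, h1⟩
    calc f (y - x) = f (B ⟨y - x, h1⟩) := by rw [h2]
      _ = c (y - x) := B.constr_basis ℝ _ _
  set lam : Fin n → ℝ := fun i => f (Pi.single i 1) with hlam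
  have hsum : ∀ y : Fin n → ℝ, ∑ i, lam i * y i = f y := by
    intro y
    conv_rhs => rw [← Finset.univ_sum_single y]
    rw [map_sum]
    refine Finset.sum_congr rfl fun i _ => ?_
    have : Pi.single i (y i) = y i • (Pi.single i 1 : Fin n → ℝ) := by
      ext j
      by_cases h : j = i <;> simp [Pi.single_apply, h]
    rw [this, map_smul, smul_eq_mul, mul_comm]
  refine ⟨lam, ?_, ?_⟩
  · intro k hk
    rw [hsum, hsum]
    have h1 := key k (Finset.mem_union_left _ hk)
    have h2 : c (k - x) = -1 := by simp [hc, hk]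
    have : f k - f x = -1 := by rw [← map_sub, h1, h2]
    linarith
  · intro l hl
    rw [hsum, hsum]
    have h1 := key l (Finset.mem_union_right _ hl)
    have h2 : c (l - x) = 1 := by
      have hlK : l ∉ K := fun h => (Finset.disjoint_left.1 hKL h) hl
      simp [hc, hl, hlK]
    have : f l - f x = 1 := by rw [← map_sub, h1, h2]
    linarith
end
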